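/- arXiv:math/0401109 — 5 statements merged into one kernel-verified Lean document; each statement's English description precedes it below -/
import Mathlib

section
/- Let W be a profinite topological k-module and V a discrete topological k-module. Then every continuous k-linear homomorphism φ: W → V factors through some discrete finitely generated quotient W/W' with W' an open cofinite submodule; equivalently, the canonical map colim_{W' ∈ Cofin(W)} Hom_k(W/W', V) → Hom_k^cont(W, V) is bijective. -/
variable (k W : Type*) [CommRing k] [AddCommGroup W] [Module k W] [TopologicalSpace W]

/-- The set of open cofinite submodules of a topological module. -/
def Cofin : Set (Submodule k W) :=
  {W' | IsOpen (W' : Set W) ∧ Module.Finite k (W ⧸ W')}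

/-- The canonical map from `W` to the product of its discrete finitely generated
quotients by open cofinite submodules. -/
def canonMap : W → ∀ W' : Cofin k W, W ⧸ W'.1 :=
  fun w W' => Submodule.Quotient.mk w

/-- The inverse limit, realized as the set of compatible families inside the product. -/
def cofinLimit : Set (∀ W' : Cofin k W, W ⧸ W'.1) :=
  {f | ∀ (W₁ W₂ : Cofin k W) (h : W₁.1 ≤ W₂.1),
    Submodule.mapQ W₁.1 W₂.1 LinearMap.id (by simpa using h) (f W₁) = f W₂}

/-- A topological module is profinite if the canonical map to the inverse limit of its
discrete finitely generated quotients is an isomorphism of topological modules,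
i.e. a homeomorphism onto the limit (with its subspace topology from the product). -/
def IsProfinite : Prop :=
  Topology.IsInducing (canonMap k W) ∧ Function.Injective (canonMap k W) ∧
    Set.range (canonMap k W) = cofinLimit k W

/-- Every continuous linear map from a profinite topological module to a
discrete module factors through a discrete finitely generated quotient `W ⧸ W'` with
`W'` open cofinite. -/
theorem continuous_hom_factors_through_cofin (k W V : Type*) [CommRing k]
    [IsNoetherianRing k]
    [AddCommGroup W] [Module k W] [TopologicalSpace W] [IsTopologicalAddGroup W]
    [ContinuousConstSMul k W]
    [AddCommGroup V] [Module k V] [TopologicalSpace V] [DiscreteTopology V]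
    (hW : IsProfinite k W) (φ : W →ₗ[k] V) (hφ : Continuous φ) :
    ∃ W' : Submodule k W, W' ∈ Cofin k W ∧
      ∃ ψ : (W ⧸ W') →ₗ[k] V, φ = ψ.comp W'.mkQ := by
  classical
  -- the kernel of φ is open
  have hker : IsOpen ((LinearMap.ker φ : Submodule k W) : Set W) := by
    have : ((LinearMap.ker φ : Submodule k W) : Set W) = φ ⁻¹' {0} := by
      ext x; simp [LinearMap.mem_ker]
    rw [this]
    exact hφ.isOpen_preimage _ (isOpen_discrete _)
  -- use inducing to find an open set of the product
  obtain ⟨U, hU, hUker⟩ := hW.1.isOpen_iff.mp hker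
  have h0U : canonMap k W 0 ∈ U := by
    have : (0 : W) ∈ ((LinearMap.ker φ : Submodule k W) : Set W) := by simp
    rw [← hUker] at this; exact this
  obtain ⟨I, u, hu, hpi⟩ := isOpen_pi_iff.mp hU _ h0U
  -- define W' as the finite intersection
  set W' : Submodule k W := ⨅ i ∈ I, (i : Cofin k W).1 with hW'def
  have hmemW' : ∀ x : W, x ∈ W' ↔ ∀ i ∈ I, x ∈ (i : Cofin k W).1 := by
    intro x; simp [hW'def, Submodule.mem_iInf]
  -- W' is contained in ker φ
  have hle : W' ≤ LinearMap.ker φ := by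
    intro x hx
    have hx' : canonMap k W x ∈ U := by
      apply hpi
      intro i hi
      have : canonMap k W x i = 0 := by
        simpa [canonMap, Submodule.Quotient.mk_eq_zero] using (hmemW' x).mp hx i hi
      rw [this]
      have h0 : canonMap k W 0 i = 0 := by simp [canonMap]
      have := (hu i hi).2
      rwa [h0] at this
    have : x ∈ ((LinearMap.ker φ : Submodule k W) : Set W) := by
      rw [← hUker]; exact hx'
    exact this
  -- W' is open
  have hopen : IsOpen ((W' : Submodule k W) : Set W) := by
    have hcoe : ((W' : Submodule k W) : Set W) = ⋂ i ∈ I, ((i : Cofin k W).1 : Set W) := by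
      ext x; simp [hmemW']
    rw [hcoe]
    exact Set.Finite.isOpen_biInter (I.finite_toSet) (fun i hi => i.2.1)
  -- W ⧸ W' is finitely generated
  haveI : ∀ i : Cofin k W, Module.Finite k (W ⧸ i.1) := fun i => i.2.2
  haveI : Module.Finite k (∀ i : I, W ⧸ (i : Cofin k W).1) := Module.Finite.pi
  haveI hNoeth : IsNoetherian k (∀ i : I, W ⧸ (i : Cofin k W).1) :=
    isNoetherian_of_isNoetherianRing_of_finite k _
  have hfin : Module.Finite k (W ⧸ W') := by
    let f : W →ₗ[k] (∀ i : I, W ⧸ (i : Cofin k W).1) :=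
      LinearMap.pi (fun i : I => ((i : Cofin k W).1).mkQ)
    have hkf : W' ≤ LinearMap.ker f := by
      intro x hx
      rw [LinearMap.mem_ker]
      ext i
      simpa [f, Submodule.Quotient.mk_eq_zero] using (hmemW' x).mp hx i i.2
    let g := W'.liftQ f hkf
    have hginj : Function.Injective g := by
      rw [← LinearMap.ker_eq_bot]
      apply Submodule.ker_liftQ_eq_bot
      intro x hx
      rw [LinearMap.mem_ker] at hx
      rw [hmemW']
      intro i hi
      have : f x ⟨i, hi⟩ = 0 := by rw [hx]; rfl
      simpa [f, Submodule.Quotient.mk_eq_zero] using this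
    haveI : IsNoetherian k (W ⧸ W') := isNoetherian_of_injective g hginj
    exact Module.Finite.of_injective g hginj
  refine ⟨W', ⟨hopen, hfin⟩, W'.liftQ φ hle, ?_⟩
  ext x
  simp
end

section
/- Let k be a noetherian commutative ring, W a profinite topological k-module, and U a closed submodule of W. Then U, with the subspace topology, is also a profinite topological k-module. -/
open Topology Filter


variable (k W : Type*) [CommRing k] [AddCommGroup W] [Module k W] [TopologicalSpace W]

section Aux
variable {k M : Type*} [CommRing k] [IsNoetherianRing k] [AddCommGroup M] [Module k M]
  [TopologicalSpace M]

lemma cofin_top : (⊤ : Submodule k M) ∈ Cofin k M := by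
  constructor
  · simpa using isOpen_univ
  · haveI : Subsingleton (M ⧸ (⊤ : Submodule k M)) :=
      Submodule.Quotient.subsingleton_iff.mpr rfl
    infer_instance

lemma cofin_inf {A B : Submodule k M} (hA : A ∈ Cofin k M) (hB : B ∈ Cofin k M) :
    A ⊓ B ∈ Cofin k M := by
  refine ⟨by rw [Submodule.coe_inf]; exact hA.1.inter hB.1, ?_⟩
  haveI := hA.2; haveI := hB.2
  haveI : IsNoetherian k ((M ⧸ A) × (M ⧸ B)) :=
    isNoetherian_of_isNoetherianRing_of_finite k _
  have hker : A ⊓ B ≤ LinearMap.ker (A.mkQ.prod B.mkQ) := by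
    rw [LinearMap.ker_prod, Submodule.ker_mkQ, Submodule.ker_mkQ]
  exact Module.Finite.of_injective ((A ⊓ B).liftQ (A.mkQ.prod B.mkQ) hker)
    (by rw [← LinearMap.ker_eq_bot]
        exact Submodule.ker_liftQ_eq_bot _ _ _
          (by rw [LinearMap.ker_prod, Submodule.ker_mkQ, Submodule.ker_mkQ]))

lemma cofin_finset_inf {ι : Type*} (s : Finset ι) (f : ι → Submodule k M)
    (h : ∀ i ∈ s, f i ∈ Cofin k M) : s.inf f ∈ Cofin k M := by
  classical
  induction s using Finset.cons_induction with
  | empty => simpa using cofin_top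
  | cons a s ha ih =>
    rw [Finset.inf_cons]
    exact cofin_inf (h a (by simp)) (ih fun i hi => h i (by simp [hi]))

lemma isOpen_singleton_quotient {V : Submodule k M} (hV : IsOpen (V : Set M))
    [IsTopologicalAddGroup M] (x : M) :
    IsOpen {z : M ⧸ V | z = Submodule.Quotient.mk x} := by
  rw [isOpen_coinduced (f := (Quotient.mk _ : M → M ⧸ V))]
  suffices h : IsOpen {y : M | y - x ∈ V} by
    convert h using 1
    ext y
    exact Submodule.Quotient.eq V
  exact hV.preimage (continuous_id.sub continuous_const)

lemma mem_comap_canonMap_nhds [IsTopologicalAddGroup M] {x : M} {s : Set M} :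
    s ∈ Filter.comap (canonMap k M) (𝓝 (canonMap k M x)) ↔
      ∃ V ∈ Cofin k M, {y : M | y - x ∈ V} ⊆ s := by
  rw [Filter.mem_comap]
  constructor
  · rintro ⟨t, ht, hts⟩
    rw [nhds_pi, Filter.mem_pi] at ht
    obtain ⟨I, hI, tt, htt, hsub⟩ := ht
    classical
    refine ⟨hI.toFinset.inf fun i => (i.1 : Submodule k M),
      cofin_finset_inf _ _ (fun i _ => i.2), fun y hy => hts (hsub ?_)⟩
    intro i hiI
    have hmem : y - x ∈ (i.1 : Submodule k M) :=
      (Finset.inf_le (by simpa using hiI) : hI.toFinset.inf (fun i => (i.1 : Submodule k M)) ≤ i.1) hy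
    have : canonMap k M y i = canonMap k M x i := (Submodule.Quotient.eq _).mpr hmem
    rw [this]
    exact mem_of_mem_nhds (htt i)
  · rintro ⟨V, hV, hVs⟩
    refine ⟨(fun g => g ⟨V, hV⟩) ⁻¹' {z | z = canonMap k M x ⟨V, hV⟩}, ?_, ?_⟩
    · refine IsOpen.mem_nhds ?_ rfl
      exact (isOpen_singleton_quotient hV.1 x).preimage (continuous_apply (A := fun W' : Cofin k M => M ⧸ W'.1) ⟨V, hV⟩)
    · intro y hy
      exact hVs ((Submodule.Quotient.eq _).mp hy)
end Aux

section Main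
variable {k W : Type*} [CommRing k] [IsNoetherianRing k]
    [AddCommGroup W] [Module k W] [TopologicalSpace W] [IsTopologicalAddGroup W]
    (U : Submodule k W)

lemma cofin_comap {V : Submodule k W} (hV : V ∈ Cofin k W) :
    Submodule.comap U.subtype V ∈ Cofin k U := by
  constructor
  · exact hV.1.preimage continuous_subtype_val
  · haveI := hV.2
    haveI : IsNoetherian k (W ⧸ V) := isNoetherian_of_isNoetherianRing_of_finite k _
    have hker : Submodule.comap U.subtype V ≤ LinearMap.ker (V.mkQ.comp U.subtype) := by
      rw [LinearMap.ker_comp, Submodule.ker_mkQ]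
    exact Module.Finite.of_injective
      ((Submodule.comap U.subtype V).liftQ (V.mkQ.comp U.subtype) hker)
      (by rw [← LinearMap.ker_eq_bot]
          exact Submodule.ker_liftQ_eq_bot _ _ _
            (by rw [LinearMap.ker_comp, Submodule.ker_mkQ]))

lemma nhds_submodule (hW : IsProfinite k W) (x : U) (s : Set U) :
    s ∈ 𝓝 x ↔ ∃ V ∈ Cofin k W, {y : U | y - x ∈ Submodule.comap U.subtype V} ⊆ s := by
  rw [nhds_subtype_eq_comap, Filter.mem_comap]
  constructor
  · rintro ⟨t, ht, hts⟩
    rw [hW.1.nhds_eq_comap] at ht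
    obtain ⟨V, hV, hVt⟩ := (mem_comap_canonMap_nhds).mp ht
    refine ⟨V, hV, fun y hy => hts ?_⟩
    apply hVt
    simpa [Submodule.mem_comap] using hy
  · rintro ⟨V, hV, hVs⟩
    refine ⟨{z : W | z - ↑x ∈ V}, ?_, fun y hy => hVs ?_⟩
    · rw [hW.1.nhds_eq_comap]
      exact mem_comap_canonMap_nhds.mpr ⟨V, hV, fun y hy => hy⟩
    · simpa [Submodule.mem_comap] using hy

end Main


/-- A closed submodule of a profinite topological module, with the subspace
topology, is itself profinite. -/
theorem isProfinite_of_closed_submodule (k W : Type*) [CommRing k] [IsNoetherianRing k]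
    [AddCommGroup W] [Module k W] [TopologicalSpace W] [IsTopologicalAddGroup W]
    [ContinuousConstSMul k W] (hW : IsProfinite k W)
    (U : Submodule k W) (hU : IsClosed (U : Set W)) :
    IsProfinite k U := by
  obtain ⟨hind, hinj, hran⟩ := hW
  have hWP : IsProfinite k W := ⟨hind, hinj, hran⟩
  refine ⟨?_, ?_, ?_⟩
  · -- inducing
    rw [Topology.isInducing_iff_nhds]
    intro x
    ext s
    rw [nhds_submodule U hWP x s, mem_comap_canonMap_nhds]
    constructor
    · rintro ⟨V, hV, hVs⟩
      exact ⟨Submodule.comap U.subtype V, cofin_comap U hV, hVs⟩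
    · rintro ⟨V', hV', hV's⟩
      have hopen : IsOpen {y : U | y - x ∈ V'} :=
        hV'.1.preimage (continuous_id.sub continuous_const)
      have hx : x ∈ {y : U | y - x ∈ V'} := by simp
      have : {y : U | y - x ∈ V'} ∈ 𝓝 x := hopen.mem_nhds hx
      rw [nhds_submodule U hWP x] at this
      obtain ⟨V, hV, hVsub⟩ := this
      exact ⟨V, hV, fun y hy => hV's (hVsub hy)⟩
  · -- injective
    intro u₁ u₂ h
    apply Subtype.ext
    apply hinj
    funext V
    refine (Submodule.Quotient.eq _).mpr ?_
    have h2 : u₁ - u₂ ∈ Submodule.comap U.subtype V.1 :=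
      (Submodule.Quotient.eq _).mp
        (congrFun h ⟨Submodule.comap U.subtype V.1, cofin_comap U V.2⟩)
    simpa using h2
  · -- range = cofinLimit
    apply Set.eq_of_subset_of_subset
    · rintro _ ⟨u, rfl⟩
      intro V₁ V₂ h
      show Submodule.mapQ _ _ _ _ (Submodule.Quotient.mk u) = Submodule.Quotient.mk u
      rw [Submodule.mapQ_apply]
      rfl
    · intro f hf
      -- transfer to a compatible family on W
      have hker : ∀ V : Cofin k W,
          Submodule.comap U.subtype V.1 ≤ LinearMap.ker (V.1.mkQ.comp U.subtype) := by
        intro V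
        rw [LinearMap.ker_comp, Submodule.ker_mkQ]
      set g : ∀ V : Cofin k W, W ⧸ V.1 := fun V =>
        Submodule.liftQ (Submodule.comap U.subtype V.1) (V.1.mkQ.comp U.subtype) (hker V)
          (f ⟨Submodule.comap U.subtype V.1, cofin_comap U V.2⟩) with hgdef
      -- a lift of f at each comap
      have hlift : ∀ V : Cofin k W, ∃ u : U,
          Submodule.Quotient.mk u = f ⟨Submodule.comap U.subtype V.1, cofin_comap U V.2⟩ ∧
            g V = Submodule.Quotient.mk (u : W) := by
        intro V
        obtain ⟨u, hu⟩ :=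
          Submodule.Quotient.mk_surjective _ (f ⟨Submodule.comap U.subtype V.1, cofin_comap U V.2⟩)
        refine ⟨u, hu, ?_⟩
        simp only [hgdef]
        rw [← hu, Submodule.liftQ_apply]
        rfl
      have hg : g ∈ cofinLimit k W := by
        intro V₁ V₂ h
        obtain ⟨u, hu, hgu⟩ := hlift V₁
        have hle : Submodule.comap U.subtype V₁.1 ≤ Submodule.comap U.subtype V₂.1 :=
          Submodule.comap_mono h
        have hf2 := hf ⟨Submodule.comap U.subtype V₁.1, cofin_comap U V₁.2⟩
          ⟨Submodule.comap U.subtype V₂.1, cofin_comap U V₂.2⟩ hle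
        rw [← hu, Submodule.mapQ_apply] at hf2
        obtain ⟨u₂, hu₂, hgu₂⟩ := hlift V₂
        rw [hgu, hgu₂, Submodule.mapQ_apply]
        rw [← hu₂] at hf2
        have : (u : W) - (u₂ : W) ∈ V₂.1 := by
          have := (Submodule.Quotient.eq _).mp hf2
          simpa using this
        exact (Submodule.Quotient.eq _).mpr (by simpa using this)
      obtain ⟨w, hw⟩ : g ∈ Set.range (canonMap k W) := hran ▸ hg
      -- w lies in U since U is closed
      have hwd : ∀ V : Cofin k W, ∃ u : U, w - (u : W) ∈ V.1 ∧
          Submodule.Quotient.mk u = f ⟨Submodule.comap U.subtype V.1, cofin_comap U V.2⟩ := by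
        intro V
        obtain ⟨u, hu, hgu⟩ := hlift V
        refine ⟨u, ?_, hu⟩
        have := congrFun hw V
        rw [hgu] at this
        exact (Submodule.Quotient.eq _).mp this
      have hwU : w ∈ U := by
        have hcl : w ∈ closure (U : Set W) := by
          rw [mem_closure_iff_nhds]
          intro t ht
          rw [hind.nhds_eq_comap] at ht
          obtain ⟨V, hV, hVt⟩ := mem_comap_canonMap_nhds.mp ht
          obtain ⟨u, huw, -⟩ := hwd ⟨V, hV⟩
          exact ⟨u, hVt (by simpa using V.neg_mem huw), u.2⟩
        rw [hU.closure_eq] at hcl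
        exact hcl
      refine ⟨⟨w, hwU⟩, ?_⟩
      funext V'
      -- find V ∈ Cofin k W with comap V ≤ V'
      have hV'nhds : (V'.1 : Set U) ∈ 𝓝 (0 : U) := V'.2.1.mem_nhds V'.1.zero_mem
      rw [nhds_submodule U hWP 0] at hV'nhds
      obtain ⟨V, hV, hVsub⟩ := hV'nhds
      have hle : Submodule.comap U.subtype V ≤ V'.1 := by
        intro y hy
        exact hVsub (by simpa using hy)
      obtain ⟨u, huw, hu⟩ := hwd ⟨V, hV⟩
      have hf2 := hf ⟨Submodule.comap U.subtype V, cofin_comap U hV⟩ V' hle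
      rw [← hu, Submodule.mapQ_apply] at hf2
      show Submodule.Quotient.mk (⟨w, hwU⟩ : U) = f V'
      rw [← hf2]
      refine (Submodule.Quotient.eq _).mpr (hle ?_)
      simpa using huw
end

section
/- Let k be a field and V a k-vector space. The evaluation map α_V : V → Hom_k^cont(D(V), k), given by α_V(v)(φ) = φ(v), is a k-linear isomorphism, where D(V) = Hom_k(V,k) carries the weak* (equivalently, profinite inverse-limit) topology. -/
variable (k V : Type*) [Field k] [TopologicalSpace k] [DiscreteTopology k]
  [AddCommGroup V] [Module k V]

/-- The weak* topology on the dual `Hom_k(V, k)`: the topology of pointwise convergence,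
`k` being discrete. -/
def weakStarTopology : TopologicalSpace (V →ₗ[k] k) :=
  TopologicalSpace.induced (fun (φ : V →ₗ[k] k) (v : V) => φ v) Pi.topologicalSpace

/-- The evaluation map `α_V : V → Hom_k^cont(D(V), k)`, `α_V(v)(φ) = φ(v)`,
is a `k`-linear isomorphism: each evaluation functional is continuous on the dual with
its weak* topology, and every continuous linear functional on the dual is evaluation at
a unique vector of `V`. -/
theorem eval_bijective_onto_continuous_dual :
    (∀ v : V, @Continuous _ _ (weakStarTopology k V) _
      (fun φ : V →ₗ[k] k => φ v)) ∧
    (∀ f : (V →ₗ[k] k) →ₗ[k] k, @Continuous _ _ (weakStarTopology k V) _ f →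
      ∃! v : V, ∀ φ : V →ₗ[k] k, f φ = φ v) := by
  letI τ := weakStarTopology k V
  constructor
  · intro v
    exact (continuous_apply v).comp continuous_induced_dom
  · intro f hf
    -- `f ⁻¹' {0}` is a neighborhood of `0`
    have h0 : f ⁻¹' {0} ∈ @nhds _ τ 0 := by
      have : IsOpen (f ⁻¹' {0}) := (isOpen_discrete _).preimage hf
      exact this.mem_nhds (by simp)
    -- unfold induced/pi neighborhoods
    rw [show τ = TopologicalSpace.induced (fun (φ : V →ₗ[k] k) (v : V) => φ v)
        Pi.topologicalSpace from rfl] at h0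
    rw [nhds_induced, Filter.mem_comap] at h0
    obtain ⟨U, hU, hUf⟩ := h0
    rw [nhds_pi, Filter.mem_pi] at hU
    obtain ⟨I, hIfin, t, ht, htU⟩ := hU
    -- get a finite set on whose common kernel `f` vanishes
    have key : ∀ φ : V →ₗ[k] k, (∀ v ∈ I, φ v = 0) → f φ = 0 := by
      intro φ hφ
      have : (fun v => φ v) ∈ I.pi t := by
        intro v hv
        show φ v ∈ t v
        rw [hφ v hv]
        simpa using mem_of_mem_nhds (ht v)
      exact hUf (htU this)
    haveI := hIfin.to_subtype
    -- f is in the span of evaluations at points of I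
    have hker : ⨅ i : I, LinearMap.ker (Module.Dual.eval k V (i : V)) ≤ LinearMap.ker f := by
      intro φ hφ
      simp only [Submodule.mem_iInf, LinearMap.mem_ker, Module.Dual.eval_apply] at hφ
      exact key φ (fun v hv => hφ ⟨v, hv⟩)
    have hspan := mem_span_of_iInf_ker_le_ker (L := fun i : I => Module.Dual.eval k V (i : V)) hker
    haveI := Fintype.ofFinite I
    obtain ⟨c, hc⟩ := (Submodule.mem_span_range_iff_exists_fun k).1 hspan
    refine ⟨∑ i : I, c i • (i : V), fun φ => ?_, fun w hw => ?_⟩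
    · rw [← hc]
      simp [Module.Dual.eval_apply]
    · have h1 : ∀ φ : V →ₗ[k] k, φ w = φ (∑ i : I, c i • (i : V)) := by
        intro φ
        rw [← hw φ, ← hc]
        simp [Module.Dual.eval_apply]
      have : ∀ φ : V →ₗ[k] k, φ (w - ∑ i : I, c i • (i : V)) = 0 := by
        intro φ; rw [map_sub, h1 φ, sub_self]
      have := (Module.forall_dual_apply_eq_zero_iff k _).1 this
      exact sub_eq_zero.1 this
end

section
/- Let k be a field with the discrete topology and X a set. The evaluation map α_X : k^(X) → Hom_k^cont(k^X, k), given by α_X(ψ)(φ) = Σ_{x∈X} φ(x)ψ(x), is a k-linear isomorphism. In words: every continuous linear functional on the product space k^X (product topology) is given by pairing with a finitely supported function. -/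
/-- Plugging `Pi.single y 1` into the pairing recovers `ψ y`. -/
lemma pairing_single {k : Type*} [Field k] {X : Type*} [DecidableEq X]
    (ψ : X →₀ k) (y : X) :
    ∑ x ∈ ψ.support, (Pi.single y 1 : X → k) x * ψ x = ψ y := by
  classical
  have : ∀ x ∈ ψ.support, (Pi.single y 1 : X → k) x * ψ x
      = if x = y then ψ x else 0 := by
    intro x _
    by_cases h : x = y <;> simp [Pi.single_apply, h, eq_comm]
  rw [Finset.sum_congr rfl this, Finset.sum_ite_eq' ψ.support y]
  by_cases h : y ∈ ψ.support
  · simp [h]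
  · simp [h, Finsupp.notMem_support_iff.mp h]

/-- For a field `k` (discrete) and a set `X`, the evaluation map
`α_X : k^(X) → Hom_k^cont(k^X, k)`, `α_X(ψ)(φ) = Σ_x φ(x)ψ(x)`, is a `k`-linear
isomorphism: pairing against a finitely supported function is a continuous linear
functional on the product space `k^X`, and every continuous linear functional on `k^X`
arises from a unique finitely supported function. -/
theorem pairing_bijective_onto_continuous_dual_of_pi
    (k : Type*) [Field k] [TopologicalSpace k] [DiscreteTopology k] (X : Type*) :
    (∀ ψ : X →₀ k, Continuous (fun φ : X → k => ∑ x ∈ ψ.support, φ x * ψ x)) ∧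
    (∀ f : (X → k) →ₗ[k] k, Continuous f →
      ∃! ψ : X →₀ k, ∀ φ : X → k, f φ = ∑ x ∈ ψ.support, φ x * ψ x) := by
  classical
  constructor
  · intro ψ
    exact continuous_finset_sum _ fun x _ => (continuous_apply x).mul continuous_const
  · intro f hf
    -- extract a finite set outside of which f doesn't see anything
    have h0 : f ⁻¹' {0} ∈ nhds (0 : X → k) := by
      apply hf.continuousAt.preimage_mem_nhds
      simp
    rw [nhds_pi, Filter.mem_pi] at h0
    obtain ⟨I, hIfin, t, ht, hsub⟩ := h0
    set S : Finset X := hIfin.toFinset with hS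
    have key : ∀ φ : X → k, (∀ x ∈ I, φ x = 0) → f φ = 0 := by
      intro φ hφ
      have : φ ∈ I.pi t := by
        intro x hx
        have h0t : (0 : k) ∈ t x := mem_of_mem_nhds (ht x)
        rw [hφ x hx]; exact h0t
      simpa using hsub this
    -- the candidate finitely supported function
    set ψ : X →₀ k := ∑ x ∈ S, Finsupp.single x (f (Pi.single x 1)) with hψdef
    have hψ : ∀ y, ψ y = if y ∈ S then f (Pi.single y 1) else 0 := by
      intro y
      rw [hψdef, Finsupp.finset_sum_apply]
      simp [Finsupp.single_apply, Finset.sum_ite_eq' S y]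
    have hmain : ∀ φ : X → k, f φ = ∑ x ∈ ψ.support, φ x * ψ x := by
      intro φ
      have hsupp : ψ.support ⊆ S := by
        intro y hy
        by_contra hyS
        exact Finsupp.mem_support_iff.mp hy (by rw [hψ y]; simp [hyS])
      have h1 : ∑ x ∈ ψ.support, φ x * ψ x = ∑ x ∈ S, φ x * ψ x := by
        refine Finset.sum_subset hsupp fun x _ hx => ?_
        rw [Finsupp.notMem_support_iff.mp hx, mul_zero]
      have h2 : ∑ x ∈ S, φ x * ψ x = f (∑ x ∈ S, (Pi.single x (φ x) : X → k)) := by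
        rw [map_sum]
        refine Finset.sum_congr rfl fun x hx => ?_
        rw [hψ x, if_pos hx]
        have hx1 : (Pi.single x (φ x) : X → k) = φ x • (Pi.single x 1 : X → k) := by
          ext y
          by_cases h : y = x <;> simp [Pi.single_apply, h]
        rw [hx1, map_smul, smul_eq_mul]
      have h3 : f (φ - ∑ x ∈ S, (Pi.single x (φ x) : X → k)) = 0 := by
        apply key
        intro x hx
        have hxS : x ∈ S := hIfin.mem_toFinset.mpr hx
        simp only [Pi.sub_apply, Finset.sum_apply]
        have hc : ∀ y ∈ S, (Pi.single y (φ y) : X → k) x = if y = x then φ y else 0 := by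
          intro y _
          by_cases h : y = x <;> simp [Pi.single_apply, h, eq_comm]
        rw [Finset.sum_congr rfl hc, Finset.sum_ite_eq' S x]
        simp [hxS]
      rw [map_sub] at h3
      rw [h1, h2]
      exact sub_eq_zero.mp h3
    refine ⟨ψ, hmain, ?_⟩
    intro ψ' hψ'
    ext y
    have heq := hψ' (Pi.single y 1)
    rw [hmain (Pi.single y 1)] at heq
    rw [pairing_single ψ y, pairing_single ψ' y] at heq
    exact heq.symm
end

section
/- Let k = Q and W = k^N with the product topology (k discrete). Then W has only countably many open cofinite submodules, but at least 2^{ℵ_0} cofinite submodules; hence W has a cofinite submodule that is not open. -/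
variable (k W : Type*) [CommRing k] [AddCommGroup W] [Module k W] [TopologicalSpace W]

/-- The product topology on `ℚ^ℕ` with each factor `ℚ` discrete. -/
def qPiTop : TopologicalSpace (ℕ → ℚ) :=
  @Pi.topologicalSpace ℕ (fun _ => ℚ) (fun _ => ⊥)

open Cardinal

/-- For `k = ℚ` and `W = ℚ^ℕ` (product topology, `ℚ` discrete), the set of
open cofinite submodules is countable, while there are at least `2^ℵ₀` cofinite
submodules; hence some cofinite submodule of `W` is not open. -/
theorem qPi_cofinite_not_open :
    Set.Countable (@Cofin ℚ (ℕ → ℚ) _ _ _ qPiTop) ∧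
    2 ^ Cardinal.aleph0 ≤
      Cardinal.mk {U : Submodule ℚ (ℕ → ℚ) // Module.Finite ℚ ((ℕ → ℚ) ⧸ U)} ∧
    ∃ U : Submodule ℚ (ℕ → ℚ), Module.Finite ℚ ((ℕ → ℚ) ⧸ U) ∧
      ¬ @IsOpen _ qPiTop (U : Set (ℕ → ℚ)) := by
  classical
  -- the submodules of vectors vanishing on a finite set of coordinates
  set V : Finset ℕ → Submodule ℚ (ℕ → ℚ) := fun s =>
    LinearMap.ker (LinearMap.pi fun i : s => LinearMap.proj (R := ℚ) (φ := fun _ : ℕ => ℚ) i.1)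
    with hV
  have hVmem : ∀ (s : Finset ℕ) (w : ℕ → ℚ), w ∈ V s ↔ ∀ i ∈ s, w i = 0 := by
    intro s w
    simp only [hV, LinearMap.mem_ker, LinearMap.pi_apply, LinearMap.proj_apply]
    constructor
    · intro h i hi; exact congrFun h ⟨i, hi⟩
    · intro h; funext i; exact h i.1 i.2
  -- each set of submodules containing V s is countable
  have hcount : ∀ s : Finset ℕ, Set.Countable {U : Submodule ℚ (ℕ → ℚ) | V s ≤ U} := by
    intro s
    have hC : Countable (Submodule ℚ (s → ℚ)) := by
      have hsurj : ∀ U : Submodule ℚ (↥s → ℚ),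
          ∃ t : Finset (↥s → ℚ), Submodule.span ℚ t = U :=
        fun U => IsNoetherian.noetherian U
      exact Function.Surjective.countable fun U => (hsurj U).imp fun t h => h
    rw [← Set.countable_coe_iff]
    have hinj : Function.Injective (fun U : {U : Submodule ℚ (ℕ → ℚ) | V s ≤ U} =>
        Submodule.map (LinearMap.pi fun i : s =>
          LinearMap.proj (R := ℚ) (φ := fun _ : ℕ => ℚ) i.1) U.1) := ?_
    · exact hinj.countable
    rintro ⟨U₁, h₁⟩ ⟨U₂, h₂⟩ h
    have := congrArg (Submodule.comap
      (LinearMap.pi fun i : s => LinearMap.proj (R := ℚ) (φ := fun _ : ℕ => ℚ) i.1)) h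
    rw [Submodule.comap_map_eq, Submodule.comap_map_eq] at this
    apply Subtype.ext
    rwa [sup_eq_left.mpr h₁, sup_eq_left.mpr h₂] at this
  -- every open submodule contains some V s
  have hopen : ∀ U : Submodule ℚ (ℕ → ℚ), @IsOpen _ qPiTop (U : Set (ℕ → ℚ)) →
      ∃ s : Finset ℕ, V s ≤ U := by
    intro U hU
    obtain ⟨I, u, hu, hsub⟩ :=
      (@isOpen_pi_iff ℕ (fun _ => ℚ) (fun _ => ⊥) (U : Set (ℕ → ℚ))).mp hU 0 U.zero_mem
    refine ⟨I, fun w hw => hsub ?_⟩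
    intro i hi
    have : w i = 0 := (hVmem I w).mp hw i hi
    rw [this]
    exact (hu i hi).2
  have hcof : Set.Countable (@Cofin ℚ (ℕ → ℚ) _ _ _ qPiTop) := by
    refine Set.Countable.mono ?_ (Set.countable_iUnion hcount)
    intro U hU
    obtain ⟨s, hs⟩ := hopen U hU.1
    exact Set.mem_iUnion.mpr ⟨s, hs⟩
  -- cardinality lower bound
  have hfin : ∀ f : (ℕ → ℚ) →ₗ[ℚ] ℚ, Module.Finite ℚ ((ℕ → ℚ) ⧸ LinearMap.ker f) := by
    intro f
    have : Module.Finite ℚ (LinearMap.range f) := inferInstance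
    exact Module.Finite.equiv f.quotKerEquivRange.symm
  set B := Module.Basis.ofVectorSpace ℚ (ℕ → ℚ) with hB
  have hmkB : #(Module.Basis.ofVectorSpaceIndex ℚ (ℕ → ℚ)) = 2 ^ aleph0 := by
    rw [B.mk_eq_rank'', rank_fun_infinite, mk_arrow, mk_denumerable ℚ, mk_nat, lift_aleph0,
      power_self_eq le_rfl]
  have hcard : 2 ^ Cardinal.aleph0 ≤
      Cardinal.mk {U : Submodule ℚ (ℕ → ℚ) // Module.Finite ℚ ((ℕ → ℚ) ⧸ U)} := by
    rw [← hmkB]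
    refine mk_le_of_injective (f := fun i => ⟨LinearMap.ker (B.coord i), hfin _⟩) ?_
    intro i j hij
    by_contra hne
    have h1 : B.coord i (B j) = 0 := by
      rw [Module.Basis.coord_apply, B.repr_self, Finsupp.single_apply_eq_zero]
      exact fun h => absurd h hne
    have h2 : B j ∈ LinearMap.ker (B.coord i) := h1
    rw [Subtype.mk.injEq] at hij
    rw [hij, LinearMap.mem_ker, Module.Basis.coord_apply, B.repr_self, Finsupp.single_eq_same] at h2
    exact one_ne_zero h2
  refine ⟨hcof, hcard, ?_⟩
  by_contra hno
  push_neg at hno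
  have hle : Cardinal.mk {U : Submodule ℚ (ℕ → ℚ) // Module.Finite ℚ ((ℕ → ℚ) ⧸ U)} ≤
      #(@Cofin ℚ (ℕ → ℚ) _ _ _ qPiTop) := by
    refine mk_le_of_injective (f := fun x => ⟨x.1, hno x.1 x.2, x.2⟩) ?_
    intro x y hxy
    exact Subtype.ext (congrArg Subtype.val hxy :)
  exact (Cardinal.cantor aleph0).not_ge (hcard.trans (hle.trans hcof.le_aleph0))
end
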